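/- arXiv:1903.08462 — 5 statements merged into one kernel-verified Lean document; each statement's English description precedes it below -/
import Mathlib

section
/- Let f be a Boolean function on n variables, S a finite set of coordinates each of which is relevant for f, and (x_j, y_j) for j in a finite index set J a family of cubes each relevant for f (f(x_j) ≠ f(y_j)), such that S and the sets I(x_j, y_j) = {i : x_j i ≠ y_j i} for j ∈ J are pairwise disjoint. If |S| + |J| > k, then f is not a k-junta. -/
/-- `x` with bit `i` flipped. -/
def flipBit {n : ℕ} (x : Fin n → Bool) (i : Fin n) : Fin n → Bool :=
  Function.update x i (!x i)

/-- Variable `i` is relevant for `f`. -/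
def Relevant {n : ℕ} (f : (Fin n → Bool) → Bool) (i : Fin n) : Prop :=
  ∃ x : Fin n → Bool, f (flipBit x i) ≠ f x

/-- `f` is a `k`-junta: it depends on at most `k` coordinates. -/
def IsJunta {n : ℕ} (k : ℕ) (f : (Fin n → Bool) → Bool) : Prop :=
  ∃ A : Finset (Fin n), A.card ≤ k ∧
    ∀ x y : Fin n → Bool, (∀ i ∈ A, x i = y i) → f x = f y

/-- The set of free coordinates of the cube `(x, y)`. -/
def cubeCoords {n : ℕ} (x y : Fin n → Bool) : Finset (Fin n) :=
  Finset.univ.filter (fun i => x i ≠ y i)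

theorem not_junta_of_relevant_set_and_disjoint_relevant_cubes
    {n k : ℕ} (f : (Fin n → Bool) → Bool)
    (S : Finset (Fin n)) (hS : ∀ i ∈ S, Relevant f i)
    (J : ℕ) (x y : Fin J → (Fin n → Bool))
    (hcube : ∀ j : Fin J, f (x j) ≠ f (y j))
    (hdisjS : ∀ j : Fin J, Disjoint S (cubeCoords (x j) (y j)))
    (hdisj : ∀ j j' : Fin J, j ≠ j' →
      Disjoint (cubeCoords (x j) (y j)) (cubeCoords (x j') (y j')))
    (hcard : S.card + J > k) :
    ¬ IsJunta k f := by
  rintro ⟨A, hAcard, hA⟩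
  have hSA : S ⊆ A := by
    intro i hi
    by_contra hiA
    obtain ⟨z, hz⟩ := hS i hi
    apply hz
    apply hA
    intro a ha
    have hne : a ≠ i := fun h => hiA (h ▸ ha)
    simp [flipBit, Function.update_of_ne hne]
  have hcubeA : ∀ j : Fin J, ∃ i ∈ A, i ∈ cubeCoords (x j) (y j) := by
    intro j
    by_contra h
    push_neg at h
    apply hcube j
    apply hA
    intro a ha
    have := h a ha
    simp [cubeCoords] at this
    exact this
  choose g hgA hgc using hcubeA
  have hginj : Function.Injective g := by
    intro j j' h
    by_contra hne
    exact Finset.disjoint_left.mp (hdisj j j' hne) (hgc j) (h ▸ hgc j')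
  have hTsub : S ∪ Finset.image g Finset.univ ⊆ A := by
    intro a ha
    rcases Finset.mem_union.mp ha with h | h
    · exact hSA h
    · obtain ⟨j, _, rfl⟩ := Finset.mem_image.mp h
      exact hgA j
  have hdisjT : Disjoint S (Finset.image g Finset.univ) := by
    rw [Finset.disjoint_right]
    intro a ha
    obtain ⟨j, _, rfl⟩ := Finset.mem_image.mp ha
    exact fun hS' => Finset.disjoint_left.mp (hdisjS j) hS' (hgc j)
  have hle : S.card + J ≤ A.card := by
    calc S.card + J = (S ∪ Finset.image g Finset.univ).card := by
          rw [Finset.card_union_of_disjoint hdisjT,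
            Finset.card_image_of_injective _ hginj, Finset.card_univ,
            Fintype.card_fin]
      _ ≤ A.card := Finset.card_le_card hTsub
  omega
end

section
/- Assume f : (Fin n → Bool) → Bool is ε-far from every k-junta with respect to a probability distribution D on Fin n → Bool, and S is a set of coordinates with |S| ≤ k. Then, when x is sampled from D and T is an independent uniformly random subset of the complement of S, the probability that f(x) ≠ f(x^T) is at least ε/2. -/
/-!
The majority vote of `f` over the subcube `{x^T : T ⊆ Sᶜ}` through `x` depends only on the
coordinates in `S`, so it is a `k`-junta and `f` disagrees with it on `D`-mass at least `ε`.
At every such point `x`, the value `f x` is the minority value on its subcube, so a uniformly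
random flip `x^T` changes the value of `f` with probability at least `1/2`.
-/

/-- `x` with the bits in `T` flipped. -/
def flipSet {n : ℕ} (x : Fin n → Bool) (T : Finset (Fin n)) : Fin n → Bool :=
  fun i => if i ∈ T then !x i else x i

open Finset

section Majority

variable {ι : Type*}

lemma card_le_two_mul_card_filter_ne_of_ne_majority (s : Finset ι) (b : ι → Bool) {c : Bool}
    (hc : c ≠ decide (#s ≤ 2 * #{t ∈ s | b t = true})) :
    #s ≤ 2 * #{t ∈ s | c ≠ b t} := by
  have hsplit := card_filter_add_card_filter_not (s := s) (fun t => b t = true)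
  cases c
  · have hfalse : {t ∈ s | false ≠ b t} = {t ∈ s | b t = true} := by
      ext t; cases b t <;> simp
    rw [hfalse]
    simpa using hc
  · have htrue : {t ∈ s | true ≠ b t} = {t ∈ s | ¬b t = true} := by
      ext t; cases b t <;> simp
    rw [htrue]
    have hminority : 2 * #{t ∈ s | b t = true} < #s := by simpa using hc
    omega

end Majority

section Flip

variable {n : ℕ}

lemma flipSet_flipSet (x : Fin n → Bool) (T U : Finset (Fin n)) :
    flipSet (flipSet x T) U = flipSet x (symmDiff T U) := by
  funext i
  by_cases hT : i ∈ T <;> by_cases hU : i ∈ U <;> simp [flipSet, mem_symmDiff, hT, hU]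

lemma flipSet_filter_ne (x y : Fin n → Bool) : flipSet x {i | x i ≠ y i} = y := by
  funext i
  simp only [flipSet, mem_filter, mem_univ, true_and]
  cases x i <;> cases y i <;> rfl

/-- Moving `x` within the subcube `{x^T : T ⊆ Sᶜ}` only permutes the subcube: translating by
`Δ = {i | x i ≠ y i} ⊆ Sᶜ` is an involution of `Sᶜ.powerset`. -/
lemma sum_powerset_compl_flipSet_congr {M : Type*} [AddCommMonoid M]
    (g : (Fin n → Bool) → M) {S : Finset (Fin n)} {x y : Fin n → Bool}
    (hxy : ∀ i ∈ S, x i = y i) :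
    ∑ T ∈ Sᶜ.powerset, g (flipSet x T) = ∑ T ∈ Sᶜ.powerset, g (flipSet y T) := by
  set Δ : Finset (Fin n) := {i | x i ≠ y i}
  have hΔ : Δ ⊆ Sᶜ := fun i hi => mem_compl.mpr fun hiS => (mem_filter.mp hi).2 (hxy i hiS)
  have hmaps : ∀ T ∈ Sᶜ.powerset, symmDiff Δ T ∈ Sᶜ.powerset := fun T hT =>
    mem_powerset.mpr (symmDiff_le_sup.trans (sup_le hΔ (mem_powerset.mp hT)))
  refine sum_nbij' (symmDiff Δ) (symmDiff Δ) hmaps hmaps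
    (fun T _ => symmDiff_symmDiff_cancel_left Δ T) (fun T _ => symmDiff_symmDiff_cancel_left Δ T)
    fun T _ => ?_
  rw [← flipSet_filter_ne x y, flipSet_flipSet, symmDiff_symmDiff_cancel_left]

end Flip

section SubcubeMajority

variable {n : ℕ} (f : (Fin n → Bool) → Bool) (S : Finset (Fin n))

/-- Ties are broken towards `true`. -/
def subcubeMajority (x : Fin n → Bool) : Bool :=
  decide (#Sᶜ.powerset ≤ 2 * #{T ∈ Sᶜ.powerset | f (flipSet x T) = true})

lemma isJunta_subcubeMajority {k : ℕ} (hS : S.card ≤ k) : IsJunta k (subcubeMajority f S) := by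
  refine ⟨S, hS, fun x y hxy => ?_⟩
  simp only [subcubeMajority, card_filter,
    sum_powerset_compl_flipSet_congr (fun z => if f z = true then 1 else 0) hxy]

lemma half_le_flip_disagreement (x : Fin n → Bool) :
    (if f x ≠ subcubeMajority f S x then (1 : ℝ) else 0) / 2 ≤
      1 / 2 ^ Sᶜ.card * ∑ T ∈ Sᶜ.powerset, (if f x ≠ f (flipSet x T) then 1 else 0) := by
  split_ifs with hne
  · have hcard := card_le_two_mul_card_filter_ne_of_ne_majority _ _ hne
    rw [card_powerset] at hcard
    have hcard' : (2 : ℝ) ^ Sᶜ.card ≤ 2 * #{T ∈ Sᶜ.powerset | f x ≠ f (flipSet x T)} := by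
      exact_mod_cast hcard
    rw [sum_boole, div_mul_eq_mul_div, le_div_iff₀ (by positivity)]
    linarith
  · rw [zero_div]
    exact mul_nonneg (by positivity) (sum_nonneg fun _ _ => by positivity)

end SubcubeMajority

theorem generate_cube_success_probability_general
    {n k : ℕ} (ε : ℝ) (f : (Fin n → Bool) → Bool)
    (D : (Fin n → Bool) → ℝ) (hD0 : ∀ x, 0 ≤ D x)
    (hfar : ∀ h : (Fin n → Bool) → Bool, IsJunta k h →
      ε ≤ ∑ x : Fin n → Bool, (if f x ≠ h x then D x else 0))
    (S : Finset (Fin n)) (hS : S.card ≤ k) :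
    ε / 2 ≤ ∑ x : Fin n → Bool, ∑ T ∈ Sᶜ.powerset,
      D x * ((1 : ℝ) / 2 ^ Sᶜ.card) * (if f x ≠ f (flipSet x T) then 1 else 0) := by
  set h := subcubeMajority f S
  calc ε / 2 ≤ (∑ x, if f x ≠ h x then D x else 0) / 2 := by
        linarith [hfar h (isJunta_subcubeMajority f S hS)]
    _ = ∑ x, D x * ((if f x ≠ h x then 1 else 0) / 2) := by
        rw [sum_div]
        refine sum_congr rfl fun x _ => ?_
        split_ifs <;> ring
    _ ≤ ∑ x, D x * (1 / 2 ^ Sᶜ.card *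
          ∑ T ∈ Sᶜ.powerset, (if f x ≠ f (flipSet x T) then 1 else 0)) :=
        sum_le_sum fun x _ => mul_le_mul_of_nonneg_left (half_le_flip_disagreement f S x) (hD0 x)
    _ = _ := by simp only [mul_sum, mul_assoc]

/-- If `f` is `ε`-far from every `k`-junta w.r.t. `D` and `|S| ≤ k`, then sampling
`x ∼ D` and a uniformly random subset `T` of the complement of `S`, we have
`f(x) ≠ f(x^T)` with probability at least `ε/2`. -/
theorem generate_cube_success_probability
    {n k : ℕ} (ε : ℝ) (f : (Fin n → Bool) → Bool)
    (D : (Fin n → Bool) → ℝ) (hD0 : ∀ x, 0 ≤ D x) (hD1 : ∑ x : Fin n → Bool, D x = 1)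
    (hfar : ∀ h : (Fin n → Bool) → Bool, IsJunta k h →
      ε ≤ ∑ x : Fin n → Bool, (if f x ≠ h x then D x else 0))
    (S : Finset (Fin n)) (hS : S.card ≤ k) :
    ε / 2 ≤ ∑ x : Fin n → Bool, ∑ T ∈ Sᶜ.powerset,
      D x * ((1 : ℝ) / 2 ^ Sᶜ.card) * (if f x ≠ f (flipSet x T) then 1 else 0) :=
  generate_cube_success_probability_general ε f D hD0 hfar S hS
end

section
/- Assume 0 < ε ≤ 1, f : (Fin n → Bool) → Bool is ε-far from every k-junta with respect to a probability distribution D on Fin n → Bool, and S is a set of coordinates with |S| ≤ k. Draw m = ⌈2/ε⌉ independent pairs (x_1, T_1), …, (x_m, T_m), where each x_j is sampled from D and each T_j is an independent uniformly random subset of the complement of S. Then the probability that f(x_j) = f(x_j^{T_j}) for all j = 1, …, m is less than 1/2. -/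
/-- The probability that the GenerateCube subroutine fails is less than `1/2`:
with `m = ⌈2/ε⌉` independent draws of a pair `(x, T)` (with `x ∼ D` and `T` a
uniformly random subset of `Sᶜ`), the probability that every draw satisfies
`f(x) = f(x^T)` is the `m`-th power of the single-draw probability, and it is
less than `1/2`. -/
theorem generate_cube_fails_with_probability_lt_half
    {n k : ℕ} (ε : ℝ) (hε0 : 0 < ε) (hε1 : ε ≤ 1) (f : (Fin n → Bool) → Bool)
    (D : (Fin n → Bool) → ℝ) (hD0 : ∀ x, 0 ≤ D x) (hD1 : ∑ x : Fin n → Bool, D x = 1)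
    (hfar : ∀ h : (Fin n → Bool) → Bool, IsJunta k h →
      ε ≤ ∑ x : Fin n → Bool, (if f x ≠ h x then D x else 0))
    (S : Finset (Fin n)) (hS : S.card ≤ k) :
    (∑ x : Fin n → Bool, ∑ T ∈ Sᶜ.powerset,
        D x * ((1 : ℝ) / 2 ^ Sᶜ.card) * (if f x = f (flipSet x T) then 1 else 0))
      ^ (⌈(2 : ℝ) / ε⌉₊) < 1 / 2 := by
  classical
  set N := Sᶜ.card with hN
  set P := Sᶜ.powerset with hPdef
  have hPcard : P.card = 2 ^ N := Finset.card_powerset _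
  set c : (Fin n → Bool) → ℕ := fun x => (P.filter (fun T => f (flipSet x T) = true)).card with hc
  set g : (Fin n → Bool) → Bool := fun x => decide (2 ^ N ≤ 2 * c x) with hg
  -- flip identity
  have hflip : ∀ (x y : Fin n → Bool), (∀ i ∈ S, x i = y i) → ∀ T ∈ P,
      flipSet y (symmDiff T (Sᶜ.filter fun i => x i ≠ y i)) = flipSet x T := by
    intro x y hxy T hT
    have hTs : T ⊆ Sᶜ := Finset.mem_powerset.mp hT
    funext i
    by_cases hiS : i ∈ S
    · have hiT : i ∉ T := fun hh => (Finset.mem_compl.mp (hTs hh)) hiS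
      have hiD : i ∉ (Sᶜ.filter fun i => x i ≠ y i) := by
        simp [Finset.mem_filter, Finset.mem_compl, hiS]
      simp [flipSet, Finset.mem_symmDiff, hiT, hiD, hxy i hiS]
    · by_cases hxyi : x i = y i
      · have hiD : i ∉ (Sᶜ.filter fun i => x i ≠ y i) := by
          simp [Finset.mem_filter, hxyi]
        by_cases hiT : i ∈ T <;>
          simp [flipSet, Finset.mem_symmDiff, hiT, hiD, hxyi]
      · have hiD : i ∈ (Sᶜ.filter fun i => x i ≠ y i) := by
          simp [Finset.mem_filter, Finset.mem_compl, hiS, hxyi]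
        have hyx : y i = !x i := by
          cases hbx : x i <;> cases hby : y i <;> simp_all
        by_cases hiT : i ∈ T <;>
          simp [flipSet, Finset.mem_symmDiff, hiT, hiD, hyx]
  have hDsymm : ∀ x y : Fin n → Bool,
      (Sᶜ.filter fun i => x i ≠ y i) = (Sᶜ.filter fun i => y i ≠ x i) := by
    intro x y; apply Finset.filter_congr; intro i _; simp [ne_comm]
  have hmemP : ∀ x y : Fin n → Bool, ∀ T ∈ P, (symmDiff T (Sᶜ.filter fun i => x i ≠ y i)) ∈ P := by
    intro x y T hT
    rw [hPdef, Finset.mem_powerset]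
    intro i hi
    rcases Finset.mem_symmDiff.mp hi with ⟨h1, _⟩ | ⟨h1, _⟩
    · exact Finset.mem_powerset.mp hT h1
    · exact Finset.mem_of_mem_filter i h1
  have hcinv : ∀ x y : Fin n → Bool, (∀ i ∈ S, x i = y i) → c x = c y := by
    intro x y hxy
    have hxy' : ∀ i ∈ S, y i = x i := fun i hi => (hxy i hi).symm
    apply Finset.card_bij' (i := fun T _ => symmDiff T (Sᶜ.filter fun i => x i ≠ y i))
      (j := fun T _ => symmDiff T (Sᶜ.filter fun i => x i ≠ y i))
    · intro T hT
      have hT' := Finset.mem_filter.mp hT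
      refine Finset.mem_filter.mpr ⟨hmemP x y T hT'.1, ?_⟩
      rw [hflip x y hxy T hT'.1]
      exact hT'.2
    · intro T hT
      have hT' := Finset.mem_filter.mp hT
      refine Finset.mem_filter.mpr ⟨hmemP x y T hT'.1, ?_⟩
      rw [hDsymm x y, hflip y x hxy' T hT'.1]
      exact hT'.2
    · intro T hT
      exact symmDiff_symmDiff_cancel_right _ _
    · intro T hT
      exact symmDiff_symmDiff_cancel_right _ _
  have hjunta : IsJunta k g := by
    refine ⟨S, hS, fun x y hxy => ?_⟩
    simp only [hg, hcinv x y hxy]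
  have hfar' := hfar g hjunta
  -- pointwise count
  set e : (Fin n → Bool) → ℕ := fun x => (P.filter (fun T => f x = f (flipSet x T))).card with he
  have hkey : ∀ x, (f x = g x → e x ≤ 2 ^ N) ∧ (f x ≠ g x → 2 * e x ≤ 2 ^ N) := by
    intro x
    constructor
    · intro _
      calc e x ≤ P.card := Finset.card_filter_le _ _
        _ = 2 ^ N := hPcard
    · intro hne
      cases hfx : f x with
      | true =>
        have hex : e x = c x := by
          apply congrArg Finset.card
          apply Finset.filter_congr
          intro T _
          rw [hfx]
          exact eq_comm
        have hgx : g x = false := by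
          cases hgx : g x
          · rfl
          · exact absurd (by rw [hfx, hgx]) hne
        have : ¬ (2 ^ N ≤ 2 * c x) := by
          intro hh
          rw [hg] at hgx
          simp only [decide_eq_false_iff_not] at hgx
          exact hgx hh
        omega
      | false =>
        have hex : e x + c x = 2 ^ N := by
          have := Finset.card_filter_add_card_filter_not
            (s := P) (p := fun T => f (flipSet x T) = true)
          rw [hPcard] at this
          have hceq : (P.filter (fun T => f (flipSet x T) = true)).card = c x := rfl
          rw [hceq] at this
          have h2 : e x = (P.filter (fun T => ¬ f (flipSet x T) = true)).card := by
            apply congrArg Finset.card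
            apply Finset.filter_congr
            intro T _
            cases hb : f (flipSet x T) <;> simp [hfx, hb]
          omega
        have hgx : g x = true := by
          cases hgx : g x
          · exact absurd (by rw [hfx, hgx]) hne
          · rfl
        have hcb : 2 ^ N ≤ 2 * c x := by
          rw [hg] at hgx
          simpa using hgx
        omega
  -- the single-draw probability
  set p : ℝ := ∑ x : Fin n → Bool, ∑ T ∈ P,
      D x * ((1 : ℝ) / 2 ^ N) * (if f x = f (flipSet x T) then 1 else 0) with hp
  have h2N : (0:ℝ) < 2 ^ N := by positivity
  have hinner : ∀ x, ∑ T ∈ P,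
      D x * ((1 : ℝ) / 2 ^ N) * (if f x = f (flipSet x T) then 1 else 0)
      = D x * ((1 : ℝ) / 2 ^ N) * (e x : ℝ) := by
    intro x
    rw [← Finset.mul_sum]
    congr 1
    rw [Finset.sum_boole]
  have hp0 : 0 ≤ p := by
    apply Finset.sum_nonneg
    intro x _
    apply Finset.sum_nonneg
    intro T _
    have : (0:ℝ) ≤ (if f x = f (flipSet x T) then (1:ℝ) else 0) := by positivity
    have h1 : (0:ℝ) ≤ D x * ((1 : ℝ) / 2 ^ N) := mul_nonneg (hD0 x) (by positivity)
    exact mul_nonneg h1 this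
  have hple : p ≤ 1 - ε / 2 := by
    have hterm : ∀ x, D x * ((1 : ℝ) / 2 ^ N) * (e x : ℝ)
        ≤ D x - (1/2) * (if f x ≠ g x then D x else 0) := by
      intro x
      by_cases hfg : f x = g x
      · have h1 : (e x : ℝ) ≤ 2 ^ N := by
          exact_mod_cast (hkey x).1 hfg
        have : D x * ((1 : ℝ) / 2 ^ N) * (e x : ℝ) ≤ D x * ((1 : ℝ) / 2 ^ N) * (2 ^ N : ℝ) := by
          exact mul_le_mul_of_nonneg_left h1 (mul_nonneg (hD0 x) (by positivity))
        simp only [hfg, ne_eq, not_true_eq_false, if_false]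
        calc D x * ((1 : ℝ) / 2 ^ N) * (e x : ℝ) ≤ D x * ((1 : ℝ) / 2 ^ N) * (2 ^ N : ℝ) := this
          _ = D x := by field_simp
          _ = D x - (1/2) * 0 := by ring
      · have h1 : (2 : ℝ) * (e x : ℝ) ≤ 2 ^ N := by
          exact_mod_cast (hkey x).2 hfg
        have h2 : (e x : ℝ) ≤ 2 ^ N / 2 := by linarith
        have : D x * ((1 : ℝ) / 2 ^ N) * (e x : ℝ) ≤ D x * ((1 : ℝ) / 2 ^ N) * ((2 ^ N : ℝ)/2) := by
          exact mul_le_mul_of_nonneg_left h2 (mul_nonneg (hD0 x) (by positivity))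
        simp only [ne_eq, hfg, not_false_eq_true, if_true]
        calc D x * ((1 : ℝ) / 2 ^ N) * (e x : ℝ) ≤ D x * ((1 : ℝ) / 2 ^ N) * ((2 ^ N : ℝ)/2) := this
          _ = D x - (1/2) * D x := by field_simp; ring
    calc p = ∑ x : Fin n → Bool, D x * ((1 : ℝ) / 2 ^ N) * (e x : ℝ) := by
            rw [hp]; exact Finset.sum_congr rfl (fun x _ => hinner x)
      _ ≤ ∑ x : Fin n → Bool, (D x - (1/2) * (if f x ≠ g x then D x else 0)) :=
            Finset.sum_le_sum (fun x _ => hterm x)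
      _ = (∑ x : Fin n → Bool, D x)
            - (1/2) * ∑ x : Fin n → Bool, (if f x ≠ g x then D x else 0) := by
            rw [Finset.sum_sub_distrib, Finset.mul_sum]
      _ ≤ 1 - ε / 2 := by
            rw [hD1]
            have := hfar'
            linarith
  -- conclude
  set m := ⌈(2:ℝ)/ε⌉₊ with hm
  have hεhalf : (0:ℝ) ≤ 1 - ε/2 := by linarith
  have h1 : p ^ m ≤ (1 - ε/2) ^ m := pow_le_pow_left₀ hp0 hple m
  have h2 : (1 - ε/2 : ℝ) ≤ Real.exp (-(ε/2)) := by
    have := Real.add_one_le_exp (-(ε/2)); linarith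
  have h3 : (1 - ε/2 : ℝ) ^ m ≤ Real.exp (-(ε/2)) ^ m := pow_le_pow_left₀ hεhalf h2 m
  have h4 : Real.exp (-(ε/2)) ^ m = Real.exp ((m : ℝ) * (-(ε/2))) := by
    rw [← Real.exp_nat_mul]
  have hmge : (2:ℝ)/ε ≤ (m : ℝ) := Nat.le_ceil _
  have hme : (1:ℝ) ≤ (m:ℝ) * (ε/2) := by
    rw [div_le_iff₀ hε0] at hmge
    nlinarith
  have h5 : Real.exp ((m : ℝ) * (-(ε/2))) ≤ Real.exp (-1) := by
    apply Real.exp_le_exp.mpr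
    nlinarith
  have h6 : Real.exp (-1) < 1/2 := by
    have hkey : Real.exp (-1) * Real.exp 1 = 1 := by
      rw [← Real.exp_add]; norm_num
    have h2e : (2:ℝ) < Real.exp 1 := by
      have := Real.exp_one_gt_d9; norm_num at this ⊢; linarith
    have hpos : 0 < Real.exp (-1) := Real.exp_pos _
    nlinarith
  calc (∑ x : Fin n → Bool, ∑ T ∈ Sᶜ.powerset,
        D x * ((1 : ℝ) / 2 ^ Sᶜ.card) * (if f x = f (flipSet x T) then 1 else 0))
      ^ (⌈(2 : ℝ) / ε⌉₊) = p ^ m := rfl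
    _ ≤ (1 - ε/2) ^ m := h1
    _ ≤ Real.exp (-(ε/2)) ^ m := h3
    _ = Real.exp ((m : ℝ) * (-(ε/2))) := h4
    _ ≤ Real.exp (-1) := h5
    _ < 1/2 := h6
end

section
/- Let g : (Fin m → Bool) → Bool be 1/3-far from both constant functions, i.e., |{x : g x = true}| ≥ 2^m/3 and |{x : g x = false}| ≥ 2^m/3. Then the total squared Fourier weight on nonempty sets satisfies Σ_{S ⊆ Fin m, S ≠ ∅} ĝ(S)² ≥ 8/9. (In words: Fourier sampling g returns a nonempty set with probability at least 8/9.) -/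
open Finset

/-- The Fourier coefficient `ĝ(S)` of a Boolean function `g`. -/
noncomputable def boolFourier {m : ℕ} (g : (Fin m → Bool) → Bool)
    (S : Finset (Fin m)) : ℝ :=
  (2 ^ m : ℝ)⁻¹ * ∑ x : Fin m → Bool,
    (if g x then (-1 : ℝ) else 1) * (-1) ^ (S.filter (fun i => x i = true)).card

lemma chi_eq {m : ℕ} (x : Fin m → Bool) (S : Finset (Fin m)) :
    ((-1 : ℝ)) ^ (S.filter (fun i => x i = true)).card
      = ∏ i ∈ S, (if x i then (-1:ℝ) else 1) := by
  rw [Finset.prod_ite, Finset.prod_const, Finset.prod_const, one_pow, mul_one]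

lemma orth {m : ℕ} (x y : Fin m → Bool) :
    ∑ S : Finset (Fin m),
      (∏ i ∈ S, (if x i then (-1:ℝ) else 1)) * (∏ i ∈ S, (if y i then (-1:ℝ) else 1))
      = if x = y then (2:ℝ)^m else 0 := by
  have key : ∀ S : Finset (Fin m),
      (∏ i ∈ S, (if x i then (-1:ℝ) else 1)) * (∏ i ∈ S, (if y i then (-1:ℝ) else 1))
      = ∏ i ∈ S, ((if x i then (-1:ℝ) else 1) * (if y i then (-1:ℝ) else 1)) := by
    intro S; rw [Finset.prod_mul_distrib]
  simp only [key]
  set c : Fin m → ℝ := fun i => (if x i then (-1:ℝ) else 1) * (if y i then (-1:ℝ) else 1) with hc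
  have hsum : ∑ S : Finset (Fin m), ∏ i ∈ S, c i = ∏ i : Fin m, (c i + 1) := by
    rw [Finset.prod_add]
    rw [← Finset.powerset_univ]
    refine Finset.sum_congr rfl ?_
    intro t _
    simp
  rw [hsum]
  by_cases h : x = y
  · subst h
    simp only [if_pos rfl]
    have : ∀ i : Fin m, c i + 1 = 2 := by
      intro i; by_cases hx : x i <;> simp [hc, hx] <;> norm_num
    rw [Finset.prod_congr rfl (fun i _ => this i), Finset.prod_const]
    simp
  · rw [if_neg h]
    obtain ⟨i, hi⟩ : ∃ i, x i ≠ y i := by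
      by_contra hcon
      push_neg at hcon
      exact h (funext hcon)
    apply Finset.prod_eq_zero (Finset.mem_univ i)
    have : c i = -1 := by
      rcases Bool.eq_false_or_eq_true (x i) with hx | hx <;>
      rcases Bool.eq_false_or_eq_true (y i) with hy | hy <;>
        simp [hc, hx, hy] at hi ⊢
    rw [this]; ring

lemma parseval {m : ℕ} (g : (Fin m → Bool) → Bool) :
    ∑ S : Finset (Fin m), (boolFourier g S) ^ 2 = 1 := by
  have hf : ∀ x, (if g x then (-1:ℝ) else 1) * (if g x then (-1:ℝ) else 1) = 1 := by
    intro x; by_cases h : g x <;> simp [h]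
  have h2 : (0:ℝ) < (2:ℝ)^m := by positivity
  calc ∑ S : Finset (Fin m), (boolFourier g S) ^ 2
      = ∑ S : Finset (Fin m), ((2 ^ m : ℝ)⁻¹ * (2 ^ m : ℝ)⁻¹) *
          ∑ x : Fin m → Bool, ∑ y : Fin m → Bool,
            ((if g x then (-1:ℝ) else 1) * (if g y then (-1:ℝ) else 1)) *
            ((∏ i ∈ S, (if x i then (-1:ℝ) else 1)) * (∏ i ∈ S, (if y i then (-1:ℝ) else 1))) := by
        refine Finset.sum_congr rfl fun S _ => ?_
        rw [boolFourier, sq, mul_mul_mul_comm, Finset.sum_mul_sum]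
        congr 1
        refine Finset.sum_congr rfl fun x _ => Finset.sum_congr rfl fun y _ => ?_
        rw [chi_eq x S, chi_eq y S]; ring
    _ = ((2 ^ m : ℝ)⁻¹ * (2 ^ m : ℝ)⁻¹) * ∑ x : Fin m → Bool, ∑ y : Fin m → Bool,
            ((if g x then (-1:ℝ) else 1) * (if g y then (-1:ℝ) else 1)) *
            ∑ S : Finset (Fin m),
            ((∏ i ∈ S, (if x i then (-1:ℝ) else 1)) * (∏ i ∈ S, (if y i then (-1:ℝ) else 1))) := by
        rw [← Finset.mul_sum]
        congr 1
        rw [Finset.sum_comm]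
        refine Finset.sum_congr rfl fun x _ => ?_
        rw [Finset.sum_comm]
        refine Finset.sum_congr rfl fun y _ => ?_
        rw [← Finset.mul_sum]
    _ = ((2 ^ m : ℝ)⁻¹ * (2 ^ m : ℝ)⁻¹) * ∑ _x : Fin m → Bool, (2:ℝ)^m := by
        congr 1
        refine Finset.sum_congr rfl fun x _ => ?_
        simp only [orth, mul_ite, mul_zero, Finset.sum_ite_eq, Finset.mem_univ, if_true]
        by_cases h : g x <;> simp [h]
    _ = 1 := by
        rw [Finset.sum_const]
        simp only [Finset.card_univ, Fintype.card_fun, Fintype.card_bool, Fintype.card_fin,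
          nsmul_eq_mul]
        push_cast
        field_simp

/-- If `g` is `1/3`-far from both constant functions, then Fourier sampling `g`
returns a nonempty set with probability at least `8/9`. -/
theorem fourier_weight_nonempty_ge {m : ℕ} (g : (Fin m → Bool) → Bool)
    (htrue : (2 ^ m : ℝ) / 3 ≤ (Finset.univ.filter (fun x : Fin m → Bool => g x = true)).card)
    (hfalse : (2 ^ m : ℝ) / 3 ≤ (Finset.univ.filter (fun x : Fin m → Bool => g x = false)).card) :
    (8 : ℝ) / 9 ≤ ∑ S ∈ Finset.univ.filter (fun S : Finset (Fin m) => S ≠ ∅),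
      (boolFourier g S) ^ 2 := by
  classical
  set T : ℕ := (Finset.univ.filter (fun x : Fin m → Bool => g x = true)).card with hT
  set F : ℕ := (Finset.univ.filter (fun x : Fin m → Bool => g x = false)).card with hF
  have hTF : (T : ℝ) + F = 2 ^ m := by
    have h := Finset.card_filter_add_card_filter_not
      (s := (Finset.univ : Finset (Fin m → Bool))) (p := fun x => g x = true)
    have hcard : (Finset.univ : Finset (Fin m → Bool)).card = 2 ^ m := by
      simp [Finset.card_univ]
    have hneg : (Finset.univ.filter (fun x : Fin m → Bool => ¬ (g x = true))).card = F := by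
      rw [hF]; congr 1; apply Finset.filter_congr; intro x _; simp
    rw [hneg, hcard] at h
    exact_mod_cast h
  have hempty : boolFourier g ∅ = (2 ^ m : ℝ)⁻¹ * ((F : ℝ) - T) := by
    rw [boolFourier]
    congr 1
    simp only [Finset.filter_empty, Finset.card_empty, pow_zero, mul_one]
    rw [Finset.sum_ite, Finset.sum_const, Finset.sum_const]
    have hneg : (Finset.univ.filter (fun x : Fin m → Bool => ¬ (g x = true))) =
        (Finset.univ.filter (fun x : Fin m → Bool => g x = false)) := by
      apply Finset.filter_congr; intro x _; simp
    rw [hneg, ← hT, ← hF]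
    simp [nsmul_eq_mul]
    ring
  have hpar := parseval g
  have hsplit : (boolFourier g ∅) ^ 2 +
      ∑ S ∈ Finset.univ.filter (fun S : Finset (Fin m) => S ≠ ∅), (boolFourier g S) ^ 2 = 1 := by
    rw [← hpar]
    have heq : Finset.univ.filter (fun S : Finset (Fin m) => S ≠ ∅) =
        Finset.univ.erase ∅ := by
      ext S; simp [Finset.mem_erase]
    rw [heq]; exact Finset.add_sum_erase _ (fun S => (boolFourier g S) ^ 2) (Finset.mem_univ ∅)
  have h2 : (0 : ℝ) < 2 ^ m := by positivity
  have hb : (boolFourier g ∅) ^ 2 ≤ 1 / 9 := by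
    rw [hempty, mul_pow]
    have h1 : ((F : ℝ) - T) ^ 2 ≤ ((2 ^ m : ℝ) / 3) ^ 2 := by
      apply sq_le_sq' <;> linarith
    calc ((2 ^ m : ℝ)⁻¹) ^ 2 * ((F : ℝ) - T) ^ 2
        ≤ ((2 ^ m : ℝ)⁻¹) ^ 2 * ((2 ^ m : ℝ) / 3) ^ 2 := by
          apply mul_le_mul_of_nonneg_left h1 (by positivity)
      _ = 1 / 9 := by field_simp; ring
  linarith
end

section
/- Let f : (Fin n → Bool) → Bool be ε-far from every (n−1)-junta with respect to the uniform distribution, i.e., f differs from every (n−1)-junta on at least ε·2^n inputs. Define f' : (Fin n → Bool) × (Fin k → Bool) → Bool by f'(x, y) = f(x) if y equals the restriction of x to its first k coordinates, and f'(x, y) = false otherwise; and let D' be the distribution of the pair (x, x restricted to its first k coordinates) where x is uniform on Fin n → Bool. Then f' is ε-far from every (n−1)-junta (as a Boolean function on n + k variables) with respect to D', i.e., for every (n−1)-junta h on n + k variables, Pr_{(x,y)∼D'}[f'(x,y) ≠ h(x,y)] ≥ ε. -/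
/-- A Boolean function on the `n + k` coordinates `Fin n ⊕ Fin k` (presented as
a function of pairs) is an `m`-junta. -/
def IsJuntaPair {n k : ℕ} (m : ℕ)
    (F : (Fin n → Bool) × (Fin k → Bool) → Bool) : Prop :=
  ∃ A : Finset (Fin n ⊕ Fin k), A.card ≤ m ∧
    ∀ p q : (Fin n → Bool) × (Fin k → Bool),
      (∀ c ∈ A, Sum.elim (fun i => p.1 i = q.1 i) (fun j => p.2 j = q.2 j) c) →
      F p = F q

/-- If `f` is `ε`-far from every `(n-1)`-junta under the uniform distribution,
then `f'(x, y) = if y = x|_[k] then f x else false` is `ε`-far from every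
`(n-1)`-junta (on `n + k` variables) with respect to the distribution `D'` of
`(x, x|_[k])` with `x` uniform. -/
theorem extension_far_from_juntas {n k : ℕ} (hkn : k ≤ n) (ε : ℝ)
    (f : (Fin n → Bool) → Bool)
    (hfar : ∀ h : (Fin n → Bool) → Bool, IsJunta (n - 1) h →
      ε * 2 ^ n ≤ ((Finset.univ.filter (fun x : Fin n → Bool => f x ≠ h x)).card : ℝ))
    (f' : (Fin n → Bool) × (Fin k → Bool) → Bool)
    (hf' : ∀ p : (Fin n → Bool) × (Fin k → Bool),
      f' p = if ∀ j : Fin k, p.2 j = p.1 (Fin.castLE hkn j) then f p.1 else false) :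
    ∀ h' : (Fin n → Bool) × (Fin k → Bool) → Bool, IsJuntaPair (n - 1) h' →
      ε ≤ ((Finset.univ.filter (fun x : Fin n → Bool =>
              f' (x, fun j => x (Fin.castLE hkn j)) ≠
              h' (x, fun j => x (Fin.castLE hkn j)))).card : ℝ) / 2 ^ n := by
  intro h' hj
  obtain ⟨A, hcard, hA⟩ := hj
  set h : (Fin n → Bool) → Bool := fun x => h' (x, fun j => x (Fin.castLE hkn j)) with hh
  have hjunta : IsJunta (n - 1) h := by
    refine ⟨A.image (Sum.elim id (Fin.castLE hkn)), ?_, ?_⟩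
    · exact le_trans (Finset.card_image_le) hcard
    · intro x y hxy
      apply hA
      intro c hc
      cases c with
      | inl i =>
        exact hxy i (Finset.mem_image.2 ⟨Sum.inl i, hc, rfl⟩)
      | inr j =>
        exact hxy _ (Finset.mem_image.2 ⟨Sum.inr j, hc, rfl⟩)
  have key := hfar h hjunta
  have hset : (Finset.univ.filter (fun x : Fin n → Bool => f x ≠ h x)) =
      (Finset.univ.filter (fun x : Fin n → Bool =>
        f' (x, fun j => x (Fin.castLE hkn j)) ≠
        h' (x, fun j => x (Fin.castLE hkn j)))) := by
    apply Finset.filter_congr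
    intro x _
    have : f' (x, fun j => x (Fin.castLE hkn j)) = f x := by
      rw [hf']; simp
    rw [this, hh]
  rw [hset] at key
  rw [le_div_iff₀ (by positivity : (0:ℝ) < 2 ^ n)]
  linarith
end
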